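/- Suppose u is a C² solution of the Euler–Lagrange (marginal-stability) equation (f u')' − g u = 0 on [r₁, r₂] with u(r₁) = 0 and u'(r₁) = 1, and suppose u(r) ≠ 0 for all r with r₁ < r ≤ r₂ (the solution started from a zero at r₁ has no further zero on the interval). Then W(r₁, r₂; ξ) ≥ 0 for every continuous, piecewise continuously differentiable ξ : [r₁, r₂] → ℝ with ξ(r₁) = ξ(r₂) = 0. (The stable direction of Newcomb's criterion: if the marginal ballooning solution has no zero, the equilibrium is stable.) -/

import Mathlib

/-!
Picone's identity: wherever `u ≠ 0`,
`(f u' ξ² / u)' = f ξ'² + g ξ² - f (ξ' - (u' / u) ξ)²`.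
Integrating it over `[c, r₂]` for `r₁ < c` and using `ξ r₂ = 0` bounds the energy integral over
`[c, r₂]` below by `-f(c) u'(c) ξ(c)² / u(c)`. As `c → r₁⁺` we have `u(c) ~ c - r₁`, while
`ξ(c)² ≤ (c - r₁) ∫_{r₁}^c ξ'² = o(c - r₁)` by Cauchy–Schwarz, so this boundary term tends to `0`.
-/

/-- A function is continuous and piecewise continuously differentiable on `[r₁, r₂]`:
it is continuous on the interval and, away from a finite exceptional set of points,
it is differentiable with continuous derivative. -/
def PiecewiseC1On (ξ : ℝ → ℝ) (r₁ r₂ : ℝ) : Prop :=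
  ContinuousOn ξ (Set.Icc r₁ r₂) ∧
    ∃ S : Finset ℝ, ∀ x ∈ Set.Icc r₁ r₂, x ∉ S →
      DifferentiableAt ℝ ξ x ∧ ContinuousAt (deriv ξ) x

/-- The energy functional `W(r₁, r₂; ξ) = (π/2) ∫_{r₁}^{r₂} (f ξ'² + g ξ²)`. -/
noncomputable def energyW (f g : ℝ → ℝ) (r₁ r₂ : ℝ) (ξ : ℝ → ℝ) : ℝ :=
  (Real.pi / 2) * ∫ r in r₁..r₂, (f r * (deriv ξ r) ^ 2 + g r * (ξ r) ^ 2)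

/-- `u` (with derivative `u'`) solves the Euler–Lagrange (marginal-stability)
equation `(f u')' − g u = 0` on `[r₁, r₂]`. -/
def SolvesEulerLagrange (f g : ℝ → ℝ) (r₁ r₂ : ℝ) (u u' : ℝ → ℝ) : Prop :=
  (∀ r ∈ Set.Icc r₁ r₂, HasDerivAt u (u' r) r) ∧
    (∀ r ∈ Set.Icc r₁ r₂, HasDerivAt (fun s => f s * u' s) (g r * u r) r)

open MeasureTheory Set Filter Topology

theorem nhdsGT_le_nhdsWithin_Icc {a b : ℝ} (hab : a < b) : 𝓝[>] a ≤ 𝓝[Icc a b] a := by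
  rw [nhdsWithin_Icc_eq_nhdsGE hab]
  exact nhdsWithin_mono _ Ioi_subset_Ici_self

theorem IntervalIntegrable.of_sq {ψ : ℝ → ℝ} {a b : ℝ} (hψ : AEStronglyMeasurable ψ)
    (h : IntervalIntegrable (fun x => ψ x ^ 2) volume a b) : IntervalIntegrable ψ volume a b := by
  refine (intervalIntegrable_const (c := 1)).add h |>.mono_fun' hψ.restrict
    (Eventually.of_forall fun x => ?_)
  simp only [Real.norm_eq_abs]
  nlinarith [sq_abs (ψ x), sq_nonneg (|ψ x| - 1)]

theorem IntervalIntegrable.of_mul_left {f ψ : ℝ → ℝ} {a b : ℝ} (hf : ContinuousOn f (uIcc a b))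
    (hf0 : ∀ x ∈ uIcc a b, f x ≠ 0) (h : IntervalIntegrable (fun x => f x * ψ x) volume a b) :
    IntervalIntegrable ψ volume a b :=
  (h.mul_continuousOn (hf.inv₀ hf0)).congr_uIoo fun x hx => by
    simp only [Pi.inv_apply]
    field_simp [hf0 x (uIoo_subset_uIcc_self hx)]

theorem sq_integral_abs_le {ψ : ℝ → ℝ} {a b : ℝ} (hab : a ≤ b)
    (h1 : IntervalIntegrable ψ volume a b) (h2 : IntervalIntegrable (fun x => ψ x ^ 2) volume a b) :
    (∫ x in a..b, |ψ x|) ^ 2 ≤ (b - a) * ∫ x in a..b, ψ x ^ 2 := by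
  rcases hab.eq_or_lt with rfl | hlt
  · simp
  set A := ∫ x in a..b, ψ x ^ 2
  set B := ∫ x in a..b, |ψ x|
  set t := B / (b - a)
  -- `0 ≤ ∫ (|ψ| - t)²` with the optimal constant `t`
  have hquad : 0 ≤ A - 2 * t * B + t ^ 2 * (b - a) := by
    have hexp : ∫ x in a..b, (|ψ x| - t) ^ 2 = A - 2 * t * B + t ^ 2 * (b - a) := by
      have hsq : (fun x => (|ψ x| - t) ^ 2) = fun x => ψ x ^ 2 - 2 * t * |ψ x| + t ^ 2 := by
        funext x; rw [sub_sq, sq_abs]; ring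
      rw [hsq,
        intervalIntegral.integral_add (h2.sub (h1.abs.const_mul _)) intervalIntegrable_const,
        intervalIntegral.integral_sub h2 (h1.abs.const_mul _), intervalIntegral.integral_const_mul,
        intervalIntegral.integral_const, smul_eq_mul]
      ring
    rw [← hexp]
    exact intervalIntegral.integral_nonneg hab fun x _ => sq_nonneg _
  have hba : 0 < b - a := sub_pos.2 hlt
  have hopt : A - 2 * t * B + t ^ 2 * (b - a) = A - B ^ 2 / (b - a) := by
    simp only [t]; field_simp; ring
  rw [hopt, sub_nonneg, div_le_iff₀ hba] at hquad
  linarith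

theorem sq_le_mul_integral_sq_of_hasDerivAt {ξ ξ' : ℝ → ℝ} {a b : ℝ} {s : Set ℝ}
    (hs : s.Countable) (hab : a ≤ b) (hc : ContinuousOn ξ (Icc a b))
    (hd : ∀ x ∈ Ioo a b \ s, HasDerivAt ξ (ξ' x) x) (h1 : IntervalIntegrable ξ' volume a b)
    (h2 : IntervalIntegrable (fun x => ξ' x ^ 2) volume a b) (ha : ξ a = 0) :
    ξ b ^ 2 ≤ (b - a) * ∫ x in a..b, ξ' x ^ 2 := by
  have hftc : ξ b = ∫ x in a..b, ξ' x := by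
    rw [integral_eq_of_hasDerivAt_off_countable_of_le ξ ξ' hab hs hc hd h1, ha, sub_zero]
  calc ξ b ^ 2 = |ξ b| ^ 2 := (sq_abs _).symm
    _ ≤ (∫ x in a..b, |ξ' x|) ^ 2 := by
      rw [hftc]
      exact pow_le_pow_left₀ (abs_nonneg _) (intervalIntegral.abs_integral_le_integral_abs hab) 2
    _ ≤ (b - a) * ∫ x in a..b, ξ' x ^ 2 := sq_integral_abs_le hab h1 h2

theorem tendsto_sq_div_sub_nhdsGT {ξ ξ' : ℝ → ℝ} {a b : ℝ} {s : Set ℝ}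
    (hs : s.Countable) (hab : a < b) (hc : ContinuousOn ξ (Icc a b))
    (hd : ∀ x ∈ Ioo a b \ s, HasDerivAt ξ (ξ' x) x) (h1 : IntervalIntegrable ξ' volume a b)
    (h2 : IntervalIntegrable (fun x => ξ' x ^ 2) volume a b) (ha : ξ a = 0) :
    Tendsto (fun x => ξ x ^ 2 / (x - a)) (𝓝[>] a) (𝓝 0) := by
  have hprim : Tendsto (fun x => ∫ y in a..x, ξ' y ^ 2) (𝓝[>] a) (𝓝 0) := by
    have h := intervalIntegral.continuousOn_primitive_interval' h2 left_mem_uIcc a left_mem_uIcc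
    rw [ContinuousWithinAt, intervalIntegral.integral_same, uIcc_of_le hab.le] at h
    exact h.mono_left (nhdsGT_le_nhdsWithin_Icc hab)
  refine tendsto_of_tendsto_of_tendsto_of_le_of_le' tendsto_const_nhds hprim ?_ ?_
  · filter_upwards [self_mem_nhdsWithin] with x hx
    exact div_nonneg (sq_nonneg _) (sub_nonneg.2 (le_of_lt hx))
  · filter_upwards [Ioo_mem_nhdsGT hab] with x hx
    have hsub : Icc a x ⊆ Icc a b := Icc_subset_Icc le_rfl hx.2.le
    have hsub' : uIcc a x ⊆ uIcc a b := by rw [uIcc_of_le hx.1.le, uIcc_of_le hab.le]; exact hsub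
    rw [div_le_iff₀' (sub_pos.2 hx.1)]
    exact sq_le_mul_integral_sq_of_hasDerivAt hs hx.1.le (hc.mono hsub)
      (fun y hy => hd y ⟨⟨hy.1.1, hy.1.2.trans hx.2⟩, hy.2⟩) (h1.mono_set hsub')
      (h2.mono_set hsub') ha

namespace SolvesEulerLagrange

variable {f g u u' : ℝ → ℝ} {a b : ℝ}

theorem mono {c d : ℝ} (h : SolvesEulerLagrange f g a b u u') (hsub : Icc c d ⊆ Icc a b) :
    SolvesEulerLagrange f g c d u u' :=
  ⟨fun r hr => h.1 r (hsub hr), fun r hr => h.2 r (hsub hr)⟩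

theorem continuousOn (h : SolvesEulerLagrange f g a b u u') : ContinuousOn u (Icc a b) :=
  fun r hr => (h.1 r hr).continuousAt.continuousWithinAt

theorem continuousOn_deriv (h : SolvesEulerLagrange f g a b u u') (hf : ContinuousOn f (Icc a b))
    (hf0 : ∀ r ∈ Icc a b, f r ≠ 0) : ContinuousOn u' (Icc a b) := by
  have hfu : ContinuousOn (fun r => f r * u' r) (Icc a b) :=
    fun r hr => (h.2 r hr).continuousAt.continuousWithinAt
  exact (hfu.div hf hf0).congr fun r hr => by simp only [Pi.div_apply]; field_simp [hf0 r hr]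

end SolvesEulerLagrange

noncomputable def piconeTerm (f u u' ξ : ℝ → ℝ) (x : ℝ) : ℝ := f x * u' x * ξ x ^ 2 / u x

theorem hasDerivAt_piconeTerm {f g u u' ξ : ℝ → ℝ} {ξ' x : ℝ} (hu : HasDerivAt u (u' x) x)
    (hfu : HasDerivAt (fun s => f s * u' s) (g x * u x) x) (hξ : HasDerivAt ξ ξ' x)
    (hux : u x ≠ 0) :
    HasDerivAt (piconeTerm f u u' ξ)
      (f x * ξ' ^ 2 + g x * ξ x ^ 2 - f x * (ξ' - u' x / u x * ξ x) ^ 2) x := by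
  refine ((hfu.mul (hξ.pow 2)).div hu hux).congr_deriv ?_
  simp only [Pi.pow_apply, Pi.mul_apply]
  field_simp
  ring

theorem neg_piconeTerm_le_integral {f g u u' ξ ξ' : ℝ → ℝ} {a b : ℝ} {s : Set ℝ}
    (hs : s.Countable) (hab : a ≤ b) (hf : ContinuousOn f (Icc a b))
    (hf0 : ∀ x ∈ Icc a b, 0 ≤ f x) (hg : ContinuousOn g (Icc a b))
    (hu : SolvesEulerLagrange f g a b u u') (hu' : ContinuousOn u' (Icc a b))
    (hu0 : ∀ x ∈ Icc a b, u x ≠ 0) (hξc : ContinuousOn ξ (Icc a b))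
    (hξd : ∀ x ∈ Ioo a b \ s, HasDerivAt ξ (ξ' x) x) (hξ' : IntervalIntegrable ξ' volume a b)
    (hF : IntervalIntegrable (fun x => f x * ξ' x ^ 2 + g x * ξ x ^ 2) volume a b)
    (hb : ξ b = 0) :
    -piconeTerm f u u' ξ a ≤ ∫ x in a..b, (f x * ξ' x ^ 2 + g x * ξ x ^ 2) := by
  set P := fun x => f x * ξ' x ^ 2 + g x * ξ x ^ 2 - f x * (ξ' x - u' x / u x * ξ x) ^ 2
  have hq : ContinuousOn (fun x => u' x / u x) (uIcc a b) := by
    rw [uIcc_of_le hab]; exact hu'.div hu.continuousOn hu0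
  have hP : IntervalIntegrable P volume a b := by
    rw [← uIcc_of_le hab] at hf hg hξc
    have h := (((hg.mul (hξc.pow 2)).intervalIntegrable).add
      (hξ'.mul_continuousOn ((continuousOn_const (c := (2 : ℝ))).mul ((hf.mul hq).mul hξc)))).sub
      (((hf.mul (hq.pow 2)).mul (hξc.pow 2)).intervalIntegrable)
    refine h.congr fun x _ => ?_
    simp only [P, Pi.mul_apply, Pi.pow_apply]
    ring
  have hftc : ∫ x in a..b, P x = piconeTerm f u u' ξ b - piconeTerm f u u' ξ a :=
    integral_eq_of_hasDerivAt_off_countable_of_le _ _ hab hs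
      (((hf.mul hu').mul (hξc.pow 2)).div hu.continuousOn hu0)
      (fun x hx => hasDerivAt_piconeTerm (hu.1 x (Ioo_subset_Icc_self hx.1))
        (hu.2 x (Ioo_subset_Icc_self hx.1)) (hξd x hx) (hu0 x (Ioo_subset_Icc_self hx.1))) hP
  have hle : ∫ x in a..b, P x ≤ ∫ x in a..b, (f x * ξ' x ^ 2 + g x * ξ x ^ 2) :=
    intervalIntegral.integral_mono_on hab hP hF fun x hx =>
      sub_le_self _ (mul_nonneg (hf0 x hx) (sq_nonneg _))
  have hφb : piconeTerm f u u' ξ b = 0 := by simp [piconeTerm, hb]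
  linarith

theorem tendsto_piconeTerm_nhdsGT {f u u' ξ : ℝ → ℝ} {a c L : ℝ} (hu : HasDerivAt u c a)
    (hua : u a = 0) (hc : c ≠ 0) (hfu : Tendsto (fun x => f x * u' x) (𝓝[>] a) (𝓝 L))
    (hξ : Tendsto (fun x => ξ x ^ 2 / (x - a)) (𝓝[>] a) (𝓝 0)) :
    Tendsto (piconeTerm f u u' ξ) (𝓝[>] a) (𝓝 0) := by
  have hslope : Tendsto (slope u a) (𝓝[>] a) (𝓝 c) :=
    (hasDerivAt_iff_tendsto_slope.1 hu).mono_left (nhdsWithin_mono _ fun x hx => ne_of_gt hx)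
  have h := (hfu.mul (hslope.inv₀ hc)).mul hξ
  rw [mul_zero] at h
  refine h.congr' ?_
  filter_upwards [self_mem_nhdsWithin] with x hx
  have hxa : x - a ≠ 0 := sub_ne_zero.2 (ne_of_gt hx)
  simp only [piconeTerm, slope_def_field, hua, sub_zero]
  field_simp

theorem SolvesEulerLagrange.integral_nonneg {f g u u' ξ ξ' : ℝ → ℝ} {a b : ℝ} {s : Set ℝ}
    (hs : s.Countable) (hab : a < b) (hf : ContinuousOn f (Icc a b))
    (hfpos : ∀ x ∈ Icc a b, 0 < f x) (hg : ContinuousOn g (Icc a b))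
    (hu : SolvesEulerLagrange f g a b u u') (hua : u a = 0) (hu'a : u' a ≠ 0)
    (hu0 : ∀ x ∈ Ioc a b, u x ≠ 0) (hξc : ContinuousOn ξ (Icc a b))
    (hξd : ∀ x ∈ Ioo a b \ s, HasDerivAt ξ (ξ' x) x) (hξ' : IntervalIntegrable ξ' volume a b)
    (hξ'2 : IntervalIntegrable (fun x => ξ' x ^ 2) volume a b)
    (hF : IntervalIntegrable (fun x => f x * ξ' x ^ 2 + g x * ξ x ^ 2) volume a b)
    (hξa : ξ a = 0) (hξb : ξ b = 0) :
    0 ≤ ∫ x in a..b, (f x * ξ' x ^ 2 + g x * ξ x ^ 2) := by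
  have hIcc : uIcc a b = Icc a b := uIcc_of_le hab.le
  have htail : ∀ c ∈ Ioo a b,
      -piconeTerm f u u' ξ c ≤ ∫ x in c..b, (f x * ξ' x ^ 2 + g x * ξ x ^ 2) := by
    intro c hc
    have hsub : Icc c b ⊆ Icc a b := Icc_subset_Icc hc.1.le le_rfl
    have hsub' : uIcc c b ⊆ uIcc a b := by rw [hIcc, uIcc_of_le hc.2.le]; exact hsub
    exact neg_piconeTerm_le_integral hs hc.2.le (hf.mono hsub)
      (fun x hx => (hfpos x (hsub hx)).le) (hg.mono hsub) (hu.mono hsub)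
      ((hu.continuousOn_deriv hf fun x hx => (hfpos x hx).ne').mono hsub)
      (fun x hx => hu0 x ⟨hc.1.trans_le hx.1, hx.2⟩) (hξc.mono hsub)
      (fun x hx => hξd x ⟨⟨hc.1.trans hx.1.1, hx.1.2⟩, hx.2⟩) (hξ'.mono_set hsub')
      (hF.mono_set hsub') hξb
  have hlim : Tendsto (fun c => -piconeTerm f u u' ξ c) (𝓝[>] a) (𝓝 0) := by
    have ha : a ∈ Icc a b := left_mem_Icc.2 hab.le
    simpa using (tendsto_piconeTerm_nhdsGT (hu.1 a ha) hua hu'a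
      ((hu.2 a ha).continuousAt.tendsto.mono_left nhdsWithin_le_nhds)
      (tendsto_sq_div_sub_nhdsGT hs hab hξc hξd hξ' hξ'2 hξa)).neg
  have hint : Tendsto (fun c => ∫ x in c..b, (f x * ξ' x ^ 2 + g x * ξ x ^ 2)) (𝓝[>] a)
      (𝓝 (∫ x in a..b, (f x * ξ' x ^ 2 + g x * ξ x ^ 2))) := by
    have h := intervalIntegral.continuousOn_primitive_interval_left
      (hIcc ▸ (intervalIntegrable_iff_integrableOn_Icc_of_le hab.le).1 hF) a left_mem_uIcc
    rw [ContinuousWithinAt, hIcc] at h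
    exact h.mono_left (nhdsGT_le_nhdsWithin_Icc hab)
  exact le_of_tendsto_of_tendsto hlim hint (eventually_of_mem (Ioo_mem_nhdsGT hab) htail)

theorem newcomb_stable_direction_general
    (r₁ r₂ : ℝ) (hr : r₁ < r₂) (f g : ℝ → ℝ)
    (hf : ContinuousOn f (Set.Icc r₁ r₂)) (hg : ContinuousOn g (Set.Icc r₁ r₂))
    (hfpos : ∀ r ∈ Set.Icc r₁ r₂, 0 < f r)
    -- `u` is a C² solution of the Euler–Lagrange equation:
    (u u' : ℝ → ℝ)
    (hu : SolvesEulerLagrange f g r₁ r₂ u u')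
    (hu1 : u r₁ = 0) (hu1' : u' r₁ = 1)
    -- the solution started from its zero at `r₁` has no further zero on the interval:
    (hnozero : ∀ r ∈ Set.Ioc r₁ r₂, u r ≠ 0) :
    ∀ ξ : ℝ → ℝ, PiecewiseC1On ξ r₁ r₂ → ξ r₁ = 0 → ξ r₂ = 0 →
      0 ≤ energyW f g r₁ r₂ ξ := by
  rintro ξ ⟨hξc, S, hS⟩ hξ₁ hξ₂
  refine mul_nonneg (by positivity) ?_
  by_cases hF : IntervalIntegrable (fun r => f r * deriv ξ r ^ 2 + g r * ξ r ^ 2) volume r₁ r₂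
  swap
  · rw [intervalIntegral.integral_undef hF]
  have hIcc : uIcc r₁ r₂ = Icc r₁ r₂ := uIcc_of_le hr.le
  have hd2 : IntervalIntegrable (fun r => deriv ξ r ^ 2) volume r₁ r₂ := by
    refine .of_mul_left (f := f) (hIcc ▸ hf) (hIcc ▸ fun r hr => (hfpos r hr).ne') ?_
    have hgξ : ContinuousOn (fun r => g r * ξ r ^ 2) (uIcc r₁ r₂) := hIcc ▸ hg.mul (hξc.pow 2)
    simpa using hF.sub hgξ.intervalIntegrable
  exact hu.integral_nonneg S.countable_toSet hr hf hfpos hg hu1 (hu1' ▸ one_ne_zero) hnozero hξc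
    (fun x hx => (hS x (Ioo_subset_Icc_self hx.1) hx.2).1.hasDerivAt)
    (hd2.of_sq (measurable_deriv ξ).aestronglyMeasurable) hd2 hF hξ₁ hξ₂

/-- **Stable direction of Newcomb's criterion.** If the C² solution `u` of the
marginal-stability Euler–Lagrange equation with `u(r₁) = 0`, `u'(r₁) = 1` has no
further zero on `(r₁, r₂]`, then `W(r₁, r₂; ξ) ≥ 0` for every continuous, piecewise
continuously differentiable `ξ` vanishing at both endpoints. -/
theorem newcomb_stable_direction
    (r₁ r₂ : ℝ) (hr : r₁ < r₂) (f g : ℝ → ℝ)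
    (hf : ContinuousOn f (Set.Icc r₁ r₂)) (hg : ContinuousOn g (Set.Icc r₁ r₂))
    (hfpos : ∀ r ∈ Set.Icc r₁ r₂, 0 < f r)
    -- `u` is a C² solution of the Euler–Lagrange equation:
    (u u' u'' : ℝ → ℝ)
    (hu : SolvesEulerLagrange f g r₁ r₂ u u')
    (hu2 : ∀ r ∈ Set.Icc r₁ r₂, HasDerivAt u' (u'' r) r)
    (hu2c : ContinuousOn u'' (Set.Icc r₁ r₂))
    (hu1 : u r₁ = 0) (hu1' : u' r₁ = 1)
    -- the solution started from its zero at `r₁` has no further zero on the interval: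
    (hnozero : ∀ r ∈ Set.Ioc r₁ r₂, u r ≠ 0) :
    ∀ ξ : ℝ → ℝ, PiecewiseC1On ξ r₁ r₂ → ξ r₁ = 0 → ξ r₂ = 0 →
      0 ≤ energyW f g r₁ r₂ ξ :=
  newcomb_stable_direction_general r₁ r₂ hr f g hf hg hfpos u u' hu hu1 hu1' hnozero
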